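/- There is an absolute constant K > 0 such that for every q ∈ ℕ, every probability measure η on [0,1)², and all unit vectors v, v′ ∈ S¹ with |v − v′| ≤ 2^{-q}, one has |H_q(Π_v η) − H_q(Π_{v′} η)| ≤ K/q, where Π_v(x) = v·x. -/

import Mathlib

open MeasureTheory Metric Set Filter
open scoped ENNReal NNReal Topology

noncomputable section

/-- The plane `ℝ²` with the Euclidean norm. -/
abbrev Plane := EuclideanSpace ℝ (Fin 2)

/-- The closed unit square `[0,1]²`. -/
def unitSquare : Set Plane := {x | ∀ i, 0 ≤ x i ∧ x i ≤ 1}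

/-- The half-open unit cube `[0,1)^d`. -/
def unitCubeHO (d : ℕ) : Set (EuclideanSpace ℝ (Fin d)) := {x | ∀ i, 0 ≤ x i ∧ x i < 1}

/-- The pinned distance set `dist(x,A) = {|x-y| : y ∈ A}`. -/
def pinnedDist (x : Plane) (A : Set Plane) : Set ℝ := (fun y => dist x y) '' A

/-- The distance set `dist(A,B) = {|x-y| : x ∈ A, y ∈ B}`. -/
def distSet (A B : Set Plane) : Set ℝ := {r | ∃ x ∈ A, ∃ y ∈ B, r = dist x y}

/-- Number of cells of the grid `εℤ` that intersect `F ⊆ ℝ`. -/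
def gridCount (F : Set ℝ) (ε : ℝ) : ℕ :=
  Nat.card {n : ℤ // (Set.Ico ((n : ℝ) * ε) (((n : ℝ) + 1) * ε) ∩ F).Nonempty}

/-- Number of cells of the grid `εℤ²` that intersect `F ⊆ ℝ²`. -/
def gridCount2 (F : Set Plane) (ε : ℝ) : ℕ :=
  Nat.card {n : Fin 2 → ℤ //
    ({x : Plane | ∀ i, (n i : ℝ) * ε ≤ x i ∧ x i < ((n i : ℝ) + 1) * ε} ∩ F).Nonempty}

/-- Lower box-counting dimension of `F ⊆ ℝ`. -/
def lbdim (F : Set ℝ) : ℝ :=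
  Filter.liminf (fun ε : ℝ => Real.log (gridCount F ε) / (-Real.log ε)) (nhdsWithin 0 (Set.Ioi 0))

/-- Upper box-counting dimension of `F ⊆ ℝ`. -/
def ubdim (F : Set ℝ) : ℝ :=
  Filter.limsup (fun ε : ℝ => Real.log (gridCount F ε) / (-Real.log ε)) (nhdsWithin 0 (Set.Ioi 0))

/-- Lower box-counting dimension of `F ⊆ ℝ²`. -/
def lbdim2 (F : Set Plane) : ℝ :=
  Filter.liminf (fun ε : ℝ => Real.log (gridCount2 F ε) / (-Real.log ε)) (nhdsWithin 0 (Set.Ioi 0))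

/-- Upper box-counting dimension of `F ⊆ ℝ²`. -/
def ubdim2 (F : Set Plane) : ℝ :=
  Filter.limsup (fun ε : ℝ => Real.log (gridCount2 F ε) / (-Real.log ε)) (nhdsWithin 0 (Set.Ioi 0))

/-- Modified lower box-counting dimension of `F ⊆ ℝ`. -/
def mlbdim (F : Set ℝ) : ℝ :=
  sInf {a : ℝ | ∃ G : ℕ → Set ℝ, (∀ i, Bornology.IsBounded (G i)) ∧ (F ⊆ ⋃ i, G i) ∧
    ∀ i, lbdim (G i) ≤ a}

/-- A set `E ⊆ ℝ^d` is discrete `(s,C)`-Ahlfors regular at scale `2^{-N}`. -/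
def DiscreteAhlfors (d : ℕ) (E : Set (EuclideanSpace ℝ (Fin d))) (s C : ℝ) (N : ℕ) : Prop :=
  E.Finite ∧ ∀ x ∈ E, ∀ k : ℕ, k < N →
    C⁻¹ * (2 : ℝ) ^ (((N : ℝ) - (k : ℝ)) * s)
        ≤ (Nat.card ↥(E ∩ closedBall x ((2 : ℝ) ^ (-(k : ℤ)))) : ℝ) ∧
    (Nat.card ↥(E ∩ closedBall x ((2 : ℝ) ^ (-(k : ℤ)))) : ℝ)
        ≤ C * (2 : ℝ) ^ (((N : ℝ) - (k : ℝ)) * s)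

/-- Topological support of a measure. -/
def msupport {X : Type*} [TopologicalSpace X] [MeasurableSpace X]
    (μ : MeasureTheory.Measure X) : Set X :=
  {x | ∀ U : Set X, IsOpen U → x ∈ U → 0 < μ U}

/-- A measure is `(s,C)`-Ahlfors regular at scale `2^{-N}`. -/
def ARMeasureAtScale (d : ℕ) (ν : Measure (EuclideanSpace ℝ (Fin d))) (s C : ℝ) (N : ℕ) : Prop :=
  ∀ x ∈ msupport ν, ∀ r : ℝ, (2 : ℝ) ^ (-(N : ℤ)) ≤ r → r ≤ 1 →
    ENNReal.ofReal (C⁻¹ * r ^ s) ≤ ν (closedBall x r) ∧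
      ν (closedBall x r) ≤ ENNReal.ofReal (C * r ^ s)

/-- A measure is `(s,C)`-Ahlfors regular. -/
def ARMeasure (d : ℕ) (ν : Measure (EuclideanSpace ℝ (Fin d))) (s C : ℝ) : Prop :=
  ∀ x ∈ msupport ν, ∀ r : ℝ, 0 < r → r ≤ 1 →
    ENNReal.ofReal (C⁻¹ * r ^ s) ≤ ν (closedBall x r) ∧
      ν (closedBall x r) ≤ ENNReal.ofReal (C * r ^ s)

/-- A set `E` is `(s,C)`-Ahlfors regular: `ℋ^s|_E` is a positive finite `(s,C)`-Ahlfors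
regular measure. -/
def ARSet (d : ℕ) (E : Set (EuclideanSpace ℝ (Fin d))) (s C : ℝ) : Prop :=
  0 < μH[s] E ∧ μH[s] E < ⊤ ∧ ARMeasure d (μH[s].restrict E) s C

/-- The half-open dyadic cube of generation `k` indexed by `m ∈ ℤ^d`. -/
def dcube (d k : ℕ) (m : Fin d → ℤ) : Set (EuclideanSpace ℝ (Fin d)) :=
  {x | ∀ i, (m i : ℝ) * (2 : ℝ) ^ (-(k : ℤ)) ≤ x i ∧ x i < ((m i : ℝ) + 1) * (2 : ℝ) ^ (-(k : ℤ))}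

/-- The homothety mapping the dyadic cube `dcube d k m` onto `[0,1)^d`. -/
def cubeMap (d k : ℕ) (m : Fin d → ℤ) (x : EuclideanSpace ℝ (Fin d)) :
    EuclideanSpace ℝ (Fin d) :=
  (EuclideanSpace.equiv (Fin d) ℝ).symm (fun i => (2 : ℝ) ^ k * x i - (m i : ℝ))

/-- The (left) corner of the dyadic cube `dcube d N m`. -/
def cubeCorner (d N : ℕ) (m : Fin d → ℤ) : EuclideanSpace ℝ (Fin d) :=
  (EuclideanSpace.equiv (Fin d) ℝ).symm (fun i => (m i : ℝ) * (2 : ℝ) ^ (-(N : ℤ)))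

/-- `μ^Q`: the normalized restriction of `μ` to a dyadic cube, renormalized to `[0,1)^d`. -/
def cubeMeasure (d k : ℕ) (m : Fin d → ℤ) (μ : Measure (EuclideanSpace ℝ (Fin d))) :
    Measure (EuclideanSpace ℝ (Fin d)) :=
  Measure.map (cubeMap d k m) ((μ (dcube d k m))⁻¹ • μ.restrict (dcube d k m))

/-- Entropy (base 2) of `μ` with respect to the dyadic partition of generation `k`. -/
def entropy (d : ℕ) (μ : Measure (EuclideanSpace ℝ (Fin d))) (k : ℕ) : ℝ :=
  ∑' m : Fin d → ℤ, -((μ (dcube d k m)).toReal * Real.logb 2 (μ (dcube d k m)).toReal)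

/-- Normalized entropy `H_k(μ) = H(μ, 𝒟_k)/k`. -/
def nentropy (d : ℕ) (μ : Measure (EuclideanSpace ℝ (Fin d))) (k : ℕ) : ℝ :=
  entropy d μ k / k

/-- The half-open dyadic interval of generation `k` indexed by `m ∈ ℤ`. -/
def dint (k : ℕ) (m : ℤ) : Set ℝ :=
  Set.Ico ((m : ℝ) * (2 : ℝ) ^ (-(k : ℤ))) (((m : ℝ) + 1) * (2 : ℝ) ^ (-(k : ℤ)))

/-- Entropy (base 2) of a measure on `ℝ` with respect to dyadic intervals of generation `k`. -/
def entropyR (μ : Measure ℝ) (k : ℕ) : ℝ :=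
  ∑' m : ℤ, -((μ (dint k m)).toReal * Real.logb 2 (μ (dint k m)).toReal)

/-- Normalized entropy of a measure on `ℝ`. -/
def nentropyR (μ : Measure ℝ) (k : ℕ) : ℝ :=
  entropyR μ k / k

open Classical in
/-- `μ` is `s`-rich at resolution `(N,q,δ)`. -/
def sRich (d : ℕ) (μ : Measure (EuclideanSpace ℝ (Fin d))) (s : ℝ) (N q : ℕ) (δ : ℝ) : Prop :=
  (1 / N : ℝ) * ∑ n ∈ Finset.range N, ∑' m : Fin d → ℤ,
    (if 0 < μ (dcube d n m) ∧ nentropy d (cubeMeasure d n m μ) q < s - δ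
      then (μ (dcube d n m)).toReal else 0) < δ

/-- `μ` is weakly `s`-regular. -/
def WeaklyRegular (d : ℕ) (μ : Measure (EuclideanSpace ℝ (Fin d))) (s : ℝ) : Prop :=
  ∀ δ : ℝ, 0 < δ → ∃ q : ℕ, ∃ N₀ : ℕ, ∀ N : ℕ, N₀ ≤ N → sRich d μ s N q δ

/-- Average of the quantity `f(μ^Q)` with respect to the scenery distribution `⟨μ⟩_{[0,N)}`. -/
def sceneryAvg (d : ℕ) (μ : Measure (EuclideanSpace ℝ (Fin d))) (N : ℕ)
    (f : Measure (EuclideanSpace ℝ (Fin d)) → ℝ) : ℝ :=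
  (1 / N : ℝ) * ∑ n ∈ Finset.range N, ∑' m : Fin d → ℤ,
    (μ (dcube d n m)).toReal * f (cubeMeasure d n m μ)

/-- The two-sided open cone with apex `a`, direction `v` and half-opening angle `β`. -/
def cone (a : Plane) (β : ℝ) (v : Plane) : Set Plane :=
  {x | x ≠ a ∧ (InnerProductGeometry.angle (x - a) v < β ∨
      InnerProductGeometry.angle (x - a) (-v) < β)}

/-- `A` is `k`-discrete: every dyadic square of generation `k` contains at most one point. -/
def kDiscrete (A : Set Plane) (k : ℕ) : Prop :=
  ∀ m : Fin 2 → ℤ, (A ∩ dcube 2 k m).Subsingleton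

/-- Hausdorff dimension of a measure: `inf {dimH E : μ E > 0}`. -/
def hdimMeasure (d : ℕ) (μ : Measure (EuclideanSpace ℝ (Fin d))) : ℝ≥0∞ :=
  ⨅ (E : Set (EuclideanSpace ℝ (Fin d))) (_ : 0 < μ E), dimH E

/-- Orthogonal projection onto direction `v`: `Π_v(x) = v ⬝ x`. -/
def projDir (v x : Plane) : ℝ := inner ℝ v x

/-- The measure associated to a discrete set: `(1/#A) ∑_D #(A ∩ D) ℒ_D`. -/
def discreteToMeasure (d N : ℕ) (A : Set (EuclideanSpace ℝ (Fin d))) :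
    Measure (EuclideanSpace ℝ (Fin d)) :=
  (Nat.card ↥A : ℝ≥0∞)⁻¹ • Measure.sum (fun m : Fin d → ℤ =>
    (Nat.card ↥(A ∩ dcube d N m) : ℝ≥0∞) •
      ((volume (dcube d N m))⁻¹ • volume.restrict (dcube d N m)))


/-- The Katz--Tao example set
`A_N = {(i 2^{-N/2}, j 2^{-N}) : 0 ≤ i < 2^{N/2} - 1, 0 ≤ j < 2^{N/2}}`. -/
def exampleSet (N : ℕ) : Set Plane :=
  {p | ∃ i j : ℤ, 0 ≤ i ∧ i < 2 ^ (N / 2) - 1 ∧ 0 ≤ j ∧ j < 2 ^ (N / 2) ∧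
    p 0 = (i : ℝ) * (2 : ℝ) ^ (-((N / 2 : ℕ) : ℤ)) ∧ p 1 = (j : ℝ) * (2 : ℝ) ^ (-(N : ℤ))}

end

/-! For `x` in the unit square, `|Π_v x - Π_{v'} x| ≤ ‖v - v'‖ ‖x‖ ≤ 2 · 2^{-q}`, so the dyadic
intervals of generation `q` containing `Π_v x` and `Π_{v'} x` have indices `⌊2^q Π_v x⌋` and
`⌊2^q Π_{v'} x⌋` differing by at most `2`. The entropy of the first index is at most the joint
entropy of the pair, and given the second index the first takes at most `5` values, so the joint
entropy exceeds the entropy of the second index by at most `log₂ 5`. Dividing by `q` gives the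
theorem with `K = log₂ 5`. -/

open Real

namespace Real

theorem negMulLog_sum_le_sum_negMulLog {ι : Type*} (s : Finset ι) {f : ι → ℝ}
    (hf : ∀ i ∈ s, 0 ≤ f i) :
    negMulLog (∑ i ∈ s, f i) ≤ ∑ i ∈ s, negMulLog (f i) := by
  have hterm : ∀ i ∈ s, -(f i * log (∑ j ∈ s, f j)) ≤ negMulLog (f i) := by
    intro i hi
    rcases (hf i hi).eq_or_lt with h0 | hpos
    · simp [← h0]
    · have := log_le_log hpos (Finset.single_le_sum hf hi)
      rw [negMulLog, neg_mul]
      nlinarith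
  calc negMulLog (∑ i ∈ s, f i) = ∑ i ∈ s, -(f i * log (∑ j ∈ s, f j)) := by
        rw [negMulLog, neg_mul, Finset.sum_mul, ← Finset.sum_neg_distrib]
    _ ≤ ∑ i ∈ s, negMulLog (f i) := Finset.sum_le_sum hterm

-- Jensen's inequality for the concave function `negMulLog` with uniform weights.
theorem sum_negMulLog_le_of_card_le {ι : Type*} (s : Finset ι) {f : ι → ℝ}
    (hf : ∀ i ∈ s, 0 ≤ f i) {k : ℕ} (hk : s.card ≤ k) :
    ∑ i ∈ s, negMulLog (f i) ≤ negMulLog (∑ i ∈ s, f i) + (∑ i ∈ s, f i) * log k := by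
  rcases s.eq_empty_or_nonempty with rfl | hs
  · simp
  have hn : (0 : ℝ) < s.card := by exact_mod_cast hs.card_pos
  have hjensen := concaveOn_negMulLog.le_map_sum (t := s) (w := fun _ => (s.card : ℝ)⁻¹)
    (p := f) (fun _ _ => by positivity) (by simp [hn.ne']) hf
  simp only [smul_eq_mul, ← Finset.mul_sum] at hjensen
  have hscale : (s.card : ℝ) * negMulLog ((s.card : ℝ)⁻¹ * ∑ i ∈ s, f i)
      = negMulLog (∑ i ∈ s, f i) + (∑ i ∈ s, f i) * log s.card := by
    rw [negMulLog_mul, negMulLog, log_inv]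
    field_simp
    ring
  have hlog : log s.card ≤ log k := log_le_log hn (by exact_mod_cast hk)
  have hsum : 0 ≤ ∑ i ∈ s, f i := Finset.sum_nonneg hf
  calc ∑ i ∈ s, negMulLog (f i)
      = s.card * ((s.card : ℝ)⁻¹ * ∑ i ∈ s, negMulLog (f i)) := by field_simp
    _ ≤ s.card * negMulLog ((s.card : ℝ)⁻¹ * ∑ i ∈ s, f i) := by gcongr
    _ = negMulLog (∑ i ∈ s, f i) + (∑ i ∈ s, f i) * log s.card := hscale
    _ ≤ _ := by gcongr

theorem sum_negMulLog_le_of_card_support_le {ι : Type*} (s : Finset ι) {f : ι → ℝ}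
    (hf : ∀ i ∈ s, 0 ≤ f i) {k : ℕ} (hk : (s.filter fun i => f i ≠ 0).card ≤ k) :
    ∑ i ∈ s, negMulLog (f i) ≤ negMulLog (∑ i ∈ s, f i) + (∑ i ∈ s, f i) * log k := by
  have hsupp := sum_negMulLog_le_of_card_le _ (fun i hi => hf i (Finset.mem_filter.1 hi).1) hk
  rwa [Finset.sum_filter_ne_zero, Finset.sum_filter_of_ne (p := fun i => f i ≠ 0)
    fun i _ hi hfi => hi (by rw [hfi, negMulLog_zero])] at hsupp

-- Entropy of a marginal ≤ joint entropy ≤ entropy of the other marginal + `log k`.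
theorem sum_negMulLog_rowSum_le {ι κ : Type*} (S : Finset ι) (T : Finset κ) {c : ι → κ → ℝ}
    (hc : ∀ m ∈ S, ∀ n ∈ T, 0 ≤ c m n) (hmass : ∑ n ∈ T, ∑ m ∈ S, c m n ≤ 1) {k : ℕ}
    (hk : ∀ n ∈ T, (S.filter fun m => c m n ≠ 0).card ≤ k) :
    ∑ m ∈ S, negMulLog (∑ n ∈ T, c m n) ≤ ∑ n ∈ T, negMulLog (∑ m ∈ S, c m n) + log k := by
  calc ∑ m ∈ S, negMulLog (∑ n ∈ T, c m n)
      ≤ ∑ m ∈ S, ∑ n ∈ T, negMulLog (c m n) :=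
        Finset.sum_le_sum fun m hm => negMulLog_sum_le_sum_negMulLog T (hc m hm)
    _ = ∑ n ∈ T, ∑ m ∈ S, negMulLog (c m n) := Finset.sum_comm
    _ ≤ ∑ n ∈ T, (negMulLog (∑ m ∈ S, c m n) + (∑ m ∈ S, c m n) * log k) :=
        Finset.sum_le_sum fun n hn =>
          sum_negMulLog_le_of_card_support_le S (fun m hm => hc m hm n hn) (hk n hn)
    _ = ∑ n ∈ T, negMulLog (∑ m ∈ S, c m n) + (∑ n ∈ T, ∑ m ∈ S, c m n) * log k := by
        rw [Finset.sum_add_distrib, Finset.sum_mul]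
    _ ≤ ∑ n ∈ T, negMulLog (∑ m ∈ S, c m n) + log k := by
        gcongr
        exact mul_le_of_le_one_left (log_natCast_nonneg k) hmass

end Real

section Measure

variable {α : Type*} [MeasurableSpace α] {μ : Measure α}

theorem toReal_measure_eq_sum_inter_preimage_singleton [IsFiniteMeasure μ] {s : Set α}
    (hs : MeasurableSet s) {G : α → ℤ} (hG : Measurable G) {T : Finset ℤ}
    (hGT : ∀ᵐ x ∂μ, G x ∈ T) :
    (μ s).toReal = ∑ n ∈ T, (μ (s ∩ G ⁻¹' {n})).toReal := by
  have hconull : μ (G ⁻¹' T)ᶜ = 0 := hGT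
  rw [← ENNReal.toReal_sum fun n _ => measure_ne_top μ _, ← measure_inter_conull hconull,
    ← Finset.set_biUnion_preimage_singleton, Set.inter_iUnion₂,
    measure_biUnion_finset]
  · exact fun m _ n _ hmn => ((pairwiseDisjoint_fiber G T) (by simpa) (by simpa) hmn).mono
      inter_subset_right inter_subset_right
  · exact fun n _ => hs.inter (hG (measurableSet_singleton n))

theorem sum_negMulLog_measure_preimage_le [IsProbabilityMeasure μ] {F G : α → ℤ}
    (hF : Measurable F) (hG : Measurable G) {S T : Finset ℤ} (hFS : ∀ᵐ x ∂μ, F x ∈ S)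
    (hGT : ∀ᵐ x ∂μ, G x ∈ T) (r : ℕ) (hFG : ∀ᵐ x ∂μ, |F x - G x| ≤ r) :
    ∑ m ∈ S, negMulLog (μ (F ⁻¹' {m})).toReal ≤
      ∑ n ∈ T, negMulLog (μ (G ⁻¹' {n})).toReal + log (2 * r + 1) := by
  set c : ℤ → ℤ → ℝ := fun m n => (μ (F ⁻¹' {m} ∩ G ⁻¹' {n})).toReal
  have hrow : ∀ m, (μ (F ⁻¹' {m})).toReal = ∑ n ∈ T, c m n := fun m =>
    toReal_measure_eq_sum_inter_preimage_singleton (hF (measurableSet_singleton m)) hG hGT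
  have hcol : ∀ n, (μ (G ⁻¹' {n})).toReal = ∑ m ∈ S, c m n := fun n => by
    simp only [c, Set.inter_comm (F ⁻¹' _)]
    exact toReal_measure_eq_sum_inter_preimage_singleton (hG (measurableSet_singleton n)) hF hFS
  have hmass : ∑ n ∈ T, ∑ m ∈ S, c m n ≤ 1 := by
    simp only [← hcol]
    rw [← ENNReal.toReal_sum fun n _ => measure_ne_top μ _,
      sum_measure_preimage_singleton T fun n _ => hG (measurableSet_singleton n)]
    exact ENNReal.toReal_le_of_le_ofReal zero_le_one (by simpa using prob_le_one)
  have hsupp : ∀ n ∈ T, (S.filter fun m => c m n ≠ 0).card ≤ 2 * r + 1 := by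
    intro n _
    have hsub : (S.filter fun m => c m n ≠ 0) ⊆ Finset.Icc (n - r) (n + r) := by
      intro m hm
      rw [Finset.mem_filter] at hm
      by_contra hfar
      refine hm.2 (ENNReal.toReal_eq_zero_iff _ |>.2 (Or.inl ?_))
      refine measure_mono_null (fun x hx => ?_) (ae_iff.1 hFG)
      simp only [Set.mem_inter_iff, Set.mem_preimage, Set.mem_singleton_iff] at hx
      simp only [Set.mem_ofPred_eq, hx.1, hx.2, abs_le, Finset.mem_Icc] at hfar ⊢
      omega
    calc (S.filter fun m => c m n ≠ 0).card ≤ (Finset.Icc (n - r) (n + r)).card :=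
          Finset.card_le_card hsub
      _ = 2 * r + 1 := by rw [Int.card_Icc]; omega
  simp only [hrow, hcol]
  exact_mod_cast sum_negMulLog_rowSum_le S T (fun _ _ _ _ => ENNReal.toReal_nonneg) hmass hsupp

end Measure

noncomputable def dyadicIndex (q : ℕ) (x : ℝ) : ℤ := ⌊2 ^ q * x⌋

theorem dyadicIndex_preimage_singleton (q : ℕ) (m : ℤ) : dyadicIndex q ⁻¹' {m} = dint q m := by
  ext x
  have h2q : (0 : ℝ) < 2 ^ q := by positivity
  simp only [Set.mem_preimage, Set.mem_singleton_iff, dyadicIndex, Int.floor_eq_iff, dint,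
    Set.mem_Ico, zpow_neg, zpow_natCast, ← div_eq_mul_inv, div_le_iff₀' h2q, lt_div_iff₀' h2q]

theorem measurable_dyadicIndex (q : ℕ) : Measurable (dyadicIndex q) :=
  (measurable_const_mul _).floor

theorem dyadicIndex_mono (q : ℕ) : Monotone (dyadicIndex q) := fun _ _ hxy =>
  Int.floor_mono (by gcongr)

theorem abs_floor_sub_floor_le {R : Type*} [Ring R] [LinearOrder R] [IsStrictOrderedRing R]
    [FloorRing R] {a b : R} {r : ℤ} (h : |a - b| ≤ r) : |⌊a⌋ - ⌊b⌋| ≤ r := by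
  have key : ∀ a b : R, |a - b| ≤ r → ⌊a⌋ - ⌊b⌋ ≤ r := fun a b h => by
    have : ((⌊a⌋ - ⌊b⌋ : ℤ) : R) < r + 1 := calc
      ((⌊a⌋ - ⌊b⌋ : ℤ) : R) ≤ a - ⌊b⌋ := by push_cast; exact sub_le_sub_right (Int.floor_le a) _
      _ < a - (b - 1) := sub_lt_sub_left (Int.sub_one_lt_floor b) _
      _ = a - b + 1 := by abel
      _ ≤ r + 1 := by gcongr; exact le_of_abs_le h
    exact Int.lt_add_one_iff.1 (by exact_mod_cast this)
  rw [abs_le]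
  constructor
  · linarith [key b a (by rwa [abs_sub_comm])]
  · exact key a b h

theorem abs_dyadicIndex_sub_le (q : ℕ) {x y : ℝ} {r : ℕ} (h : |x - y| ≤ r * 2 ^ (-(q : ℤ))) :
    |dyadicIndex q x - dyadicIndex q y| ≤ r := by
  refine abs_floor_sub_floor_le ?_
  rw [← mul_sub, abs_mul, abs_of_pos (by positivity)]
  calc 2 ^ q * |x - y| ≤ 2 ^ q * (r * 2 ^ (-(q : ℤ))) := by gcongr
    _ = r := by rw [zpow_neg, zpow_natCast]; field_simp
    _ = ((r : ℤ) : ℝ) := by norm_cast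

theorem entropyR_eq_sum_negMulLog (μ : Measure ℝ) (q : ℕ) {S : Finset ℤ}
    (hS : ∀ m ∉ S, μ (dint q m) = 0) :
    entropyR μ q = (∑ m ∈ S, negMulLog (μ (dint q m)).toReal) / log 2 := by
  rw [entropyR, Finset.sum_div, tsum_eq_sum fun m hm => by simp [hS m hm]]
  refine Finset.sum_congr rfl fun m _ => ?_
  rw [negMulLog, logb]
  ring

theorem entropyR_map_eq {α : Type*} [MeasurableSpace α] (η : Measure α) (q : ℕ) {f : α → ℝ}
    (hf : Measurable f) {S : Finset ℤ} (hS : ∀ᵐ x ∂η, dyadicIndex q (f x) ∈ S) :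
    entropyR (η.map f) q =
      (∑ m ∈ S, negMulLog (η ((dyadicIndex q ∘ f) ⁻¹' {m})).toReal) / log 2 := by
  have hcell : ∀ m, η.map f (dint q m) = η ((dyadicIndex q ∘ f) ⁻¹' {m}) := fun m => by
    rw [← dyadicIndex_preimage_singleton, Set.preimage_comp,
      Measure.map_apply hf (measurable_dyadicIndex q (measurableSet_singleton m))]
  simp only [← hcell]
  refine entropyR_eq_sum_negMulLog _ q fun m hm => ?_
  rw [hcell]
  exact measure_eq_zero_iff_ae_notMem.2 <| hS.mono fun x hx hxm =>
    hm (by rwa [← show dyadicIndex q (f x) = m from hxm])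

theorem entropyR_map_le_of_abs_sub_le {α : Type*} [MeasurableSpace α] (η : Measure α)
    [IsProbabilityMeasure η] (q : ℕ) {f g : α → ℝ} (hf : Measurable f) (hg : Measurable g)
    {R : ℝ} (hfR : ∀ᵐ x ∂η, |f x| ≤ R) (hgR : ∀ᵐ x ∂η, |g x| ≤ R) {r : ℕ}
    (hfg : ∀ᵐ x ∂η, |f x - g x| ≤ r * 2 ^ (-(q : ℤ))) :
    entropyR (η.map f) q ≤ entropyR (η.map g) q + logb 2 (2 * r + 1) := by
  have hwindow : ∀ {h : α → ℝ}, (∀ᵐ x ∂η, |h x| ≤ R) →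
      ∀ᵐ x ∂η, dyadicIndex q (h x) ∈ Finset.Icc (dyadicIndex q (-R)) (dyadicIndex q R) :=
    fun hR => hR.mono fun x hx => Finset.mem_Icc.2
      ⟨dyadicIndex_mono q (neg_le_of_abs_le hx), dyadicIndex_mono q (le_of_abs_le hx)⟩
  rw [entropyR_map_eq η q hf (hwindow hfR), entropyR_map_eq η q hg (hwindow hgR), logb,
    ← add_div]
  gcongr
  exact sum_negMulLog_measure_preimage_le ((measurable_dyadicIndex q).comp hf)
    ((measurable_dyadicIndex q).comp hg) (hwindow hfR) (hwindow hgR) r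
    (hfg.mono fun x hx => abs_dyadicIndex_sub_le q hx)

theorem measurableSet_unitCubeHO (d : ℕ) : MeasurableSet (unitCubeHO d) := by
  have : unitCubeHO d = ⋂ i, (fun x : EuclideanSpace ℝ (Fin d) => x i) ⁻¹' Set.Ico 0 1 := by
    ext x
    simp [unitCubeHO]
  rw [this]
  exact MeasurableSet.iInter fun i =>
    (EuclideanSpace.proj (𝕜 := ℝ) i).continuous.measurable measurableSet_Ico

theorem sq_norm_le_of_mem_unitCubeHO {d : ℕ} {x : EuclideanSpace ℝ (Fin d)}
    (hx : x ∈ unitCubeHO d) : ‖x‖ ^ 2 ≤ d := by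
  rw [EuclideanSpace.norm_sq_eq]
  calc ∑ i, ‖x i‖ ^ 2 ≤ ∑ _i : Fin d, (1 : ℝ) := by
        gcongr with i
        rw [Real.norm_eq_abs, sq_abs]
        nlinarith [hx i]
    _ = d := by simp

theorem continuous_projDir (v : Plane) : Continuous (projDir v) :=
  continuous_const.inner continuous_id

theorem projDir_sub_projDir (v v' x : Plane) :
    projDir v x - projDir v' x = projDir (v - v') x := by
  simp only [projDir, inner_sub_left]

theorem entropyR_map_projDir_le (q : ℕ) (η : Measure Plane) [IsProbabilityMeasure η]
    (hη : η (unitCubeHO 2) = 1) {v v' : Plane} (hv : ‖v‖ ≤ 1) (hv' : ‖v'‖ ≤ 1)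
    (hvv' : ‖v - v'‖ ≤ (2 : ℝ) ^ (-(q : ℤ))) :
    entropyR (η.map (projDir v)) q ≤ entropyR (η.map (projDir v')) q + logb 2 5 := by
  have hcube : ∀ᵐ x ∂η, ‖x‖ ≤ 2 := by
    have : ∀ᵐ x ∂η, x ∈ unitCubeHO 2 :=
      (ae_iff_measure_eq (measurableSet_unitCubeHO 2).nullMeasurableSet).2
        (by rw [measure_univ]; exact hη)
    refine this.mono fun x hx => ?_
    have hsq : ‖x‖ ^ 2 ≤ 2 := by exact_mod_cast sq_norm_le_of_mem_unitCubeHO hx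
    nlinarith [norm_nonneg x]
  have hbound : ∀ w : Plane, ‖w‖ ≤ 1 → ∀ᵐ x ∂η, |projDir w x| ≤ 2 := fun w hw =>
    hcube.mono fun x hx => calc
      |projDir w x| ≤ ‖w‖ * ‖x‖ := abs_real_inner_le_norm w x
      _ ≤ 1 * 2 := by gcongr
      _ = 2 := one_mul 2
  have hclose : ∀ᵐ x ∂η, |projDir v x - projDir v' x| ≤ (2 : ℕ) * 2 ^ (-(q : ℤ)) :=
    hcube.mono fun x hx => calc
      |projDir v x - projDir v' x| ≤ ‖v - v'‖ * ‖x‖ := by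
        rw [projDir_sub_projDir]; exact abs_real_inner_le_norm _ x
      _ ≤ 2 ^ (-(q : ℤ)) * 2 := by gcongr
      _ = (2 : ℕ) * 2 ^ (-(q : ℤ)) := by push_cast; ring
  have h := entropyR_map_le_of_abs_sub_le η q (continuous_projDir v).measurable
    (continuous_projDir v').measurable (hbound v hv) (hbound v' hv') hclose
  norm_num at h
  exact h

/-- **Equation (2.4).** Continuity of projected entropy in the direction: if
`|v - v'| ≤ 2^{-q}` then `|H_q(Π_v η) - H_q(Π_{v'} η)| ≤ K/q`. -/
theorem continuity_of_projected_entropy :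
    ∃ K : ℝ, 0 < K ∧ ∀ q : ℕ,
    ∀ η : MeasureTheory.Measure Plane, MeasureTheory.IsProbabilityMeasure η →
      η (unitCubeHO 2) = 1 →
    ∀ v v' : Plane, ‖v‖ = 1 → ‖v'‖ = 1 → ‖v - v'‖ ≤ (2 : ℝ) ^ (-(q : ℤ)) →
    |nentropyR (η.map (projDir v)) q - nentropyR (η.map (projDir v')) q| ≤ K / q := by
  refine ⟨logb 2 5, logb_pos one_lt_two (by norm_num), fun q η hη hcube v v' hv hv' hvv' => ?_⟩
  have hle := entropyR_map_projDir_le q η hcube hv.le hv'.le hvv'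
  have hge := entropyR_map_projDir_le q η hcube hv'.le hv.le (by rwa [norm_sub_rev])
  rw [nentropyR, nentropyR, ← sub_div, abs_div, Nat.abs_cast]
  exact div_le_div_of_nonneg_right (abs_sub_le_iff.2 ⟨by linarith, by linarith⟩) q.cast_nonneg
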